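/- Let m > 0 be real, p ≥ 1 an integer, and 0 < δ < m^{1/p}. There exist constants η₀ > 0, c > 0 and C > 0 (depending only on m, p, δ) such that for every η with 0 < η < η₀, the solution (a,b) : ℝ → ℝ² of the planar system ȧ = b, ḃ = m²a - a^{2p+1} with a(0) = η, b(0) = 0 admits a time τ_η > 0 satisfying: a(τ_η) = δ, b(t) > 0 for all t ∈ (0, τ_η], and c·ln(1/η) ≤ τ_η ≤ C·ln(1/η). -/

import Mathlib

/-!
The energy `b² + potential m p a` is conserved and the potential decreases on `[0, δ]`, so a
solution starting at rest from `η` can never enter `|a| < η`; hence `a ≥ η` for all time.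
For any `σ`, the derivative of `e^{-σt} (b + σ a)` is `e^{-σt} (m² - σ² - a^{2p}) a`: these
are the eigendirections of the linearisation at the saddle `0`. While `η ≤ a ≤ δ` this is
nonnegative for `σ = ±r`, `r² = m² - δ^{2p}`, and nonpositive for `σ = ±m`. Thus
`b + r a ≥ r η e^{rt}` forces `a` to reach `δ` within `(1/r) log(1/η) + O(1)`,
`b - r a ≥ -r η e^{-rt}` keeps `b > 0`, `b - m a < 0` bounds `b + r a` from above, and
`b + m a ≤ m η e^{mt}` gives `δ ≤ η e^{mτ}`.
-/

open Real Set

noncomputable def potential (m : ℝ) (p : ℕ) (x : ℝ) : ℝ :=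
  x ^ (2 * p + 2) / (p + 1) - m ^ 2 * x ^ 2

lemma hasDerivAt_potential (m : ℝ) (p : ℕ) (x : ℝ) :
    HasDerivAt (potential m p) (-2 * (m ^ 2 * x - x ^ (2 * p + 1))) x := by
  have h : HasDerivAt (fun y => y ^ (2 * p + 2) / ((p : ℝ) + 1) - m ^ 2 * y ^ 2) _ x :=
    ((hasDerivAt_pow (2 * p + 2) x).div_const _).sub ((hasDerivAt_pow 2 x).const_mul (m ^ 2))
  refine h.congr_deriv ?_
  simp only [show 2 * p + 2 - 1 = 2 * p + 1 by omega]
  field_simp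
  push_cast
  ring

lemma potential_abs (m : ℝ) (p : ℕ) (x : ℝ) : potential m p |x| = potential m p x := by
  have h : Even (2 * p + 2) := ⟨p + 1, by ring⟩
  simp only [potential, h.pow_abs, even_two.pow_abs]

lemma potential_strictAntiOn {m δ : ℝ} {p : ℕ} (hδ : δ ^ (2 * p) < m ^ 2) :
    StrictAntiOn (potential m p) (Icc 0 δ) := by
  refine strictAntiOn_of_hasDerivWithinAt_neg (convex_Icc 0 δ)
    (fun x _ => (hasDerivAt_potential m p x).continuousAt.continuousWithinAt)
    (fun x _ => (hasDerivAt_potential m p x).hasDerivWithinAt) fun x hx => ?_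
  rw [interior_Icc] at hx
  have hxδ : x ^ (2 * p) ≤ δ ^ (2 * p) := pow_le_pow_left₀ hx.1.le hx.2.le _
  have : 0 < x * (m ^ 2 - x ^ (2 * p)) := mul_pos hx.1 (by linarith)
  linarith [show m ^ 2 * x - x ^ (2 * p + 1) = x * (m ^ 2 - x ^ (2 * p)) by ring]

structure IsSolution (m : ℝ) (p : ℕ) (a b : ℝ → ℝ) : Prop where
  hasDerivAt_fst : ∀ t, HasDerivAt a (b t) t
  hasDerivAt_snd : ∀ t, HasDerivAt b (m ^ 2 * a t - a t ^ (2 * p + 1)) t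

namespace IsSolution

variable {m δ η : ℝ} {p : ℕ} {a b : ℝ → ℝ}

lemma continuous_fst (hs : IsSolution m p a b) : Continuous a :=
  continuous_iff_continuousAt.2 fun t => (hs.hasDerivAt_fst t).continuousAt

lemma energy_eq (hs : IsSolution m p a b) (t : ℝ) :
    b t ^ 2 + potential m p (a t) = b 0 ^ 2 + potential m p (a 0) := by
  have hE : ∀ s, HasDerivAt (fun s => b s ^ 2 + potential m p (a s)) 0 s := fun s => by
    have h : HasDerivAt (fun s => b s ^ 2 + potential m p (a s)) _ s :=
      ((hs.hasDerivAt_snd s).pow 2).add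
        ((hasDerivAt_potential m p (a s)).comp s (hs.hasDerivAt_fst s))
    exact h.congr_deriv (by ring)
  exact is_const_of_deriv_eq_zero (fun s => (hE s).differentiableAt) (fun s => (hE s).deriv) t 0

lemma le_fst (hs : IsSolution m p a b) (hη : 0 < η) (hηm : η ^ (2 * p) < m ^ 2)
    (ha0 : a 0 = η) (hb0 : b 0 = 0) (t : ℝ) : η ≤ a t := by
  have habs : ∀ s, η ≤ |a s| := fun s => by
    by_contra! h
    have hV : potential m p η < potential m p |a s| :=
      potential_strictAntiOn hηm ⟨abs_nonneg _, h.le⟩ ⟨hη.le, le_rfl⟩ h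
    have := hs.energy_eq s
    rw [ha0, hb0, ← potential_abs m p (a s)] at this
    nlinarith [sq_nonneg (b s)]
  by_contra! h
  have hneg : a t < 0 := by
    by_contra! h'
    linarith [habs t, abs_of_nonneg h']
  obtain ⟨s, -, hs0⟩ := intermediate_value_uIcc hs.continuous_fst.continuousOn
    (show (0 : ℝ) ∈ uIcc (a t) (a 0) by rw [ha0]; exact mem_uIcc.2 (Or.inl ⟨hneg.le, hη.le⟩))
  linarith [habs s, show |a s| = 0 by rw [hs0, abs_zero]]

lemma hasDerivAt_exp_mul (hs : IsSolution m p a b) (σ t : ℝ) :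
    HasDerivAt (fun t => exp (-(σ * t)) * (b t + σ * a t))
      (exp (-(σ * t)) * ((m ^ 2 - σ ^ 2 - a t ^ (2 * p)) * a t)) t := by
  have h : HasDerivAt (fun t => exp (-(σ * t)) * (b t + σ * a t)) _ t :=
    (((hasDerivAt_id t).const_mul σ).neg.exp).mul
      ((hs.hasDerivAt_snd t).add ((hs.hasDerivAt_fst t).const_mul σ))
  exact h.congr_deriv (by simp only [Pi.neg_apply, id]; ring)

lemma mul_exp_le_snd_add_mul_fst (hs : IsSolution m p a b) {σ T : ℝ}
    (hσ : σ ^ 2 + δ ^ (2 * p) ≤ m ^ 2) (hT : 0 ≤ T) (haT : ∀ t ∈ Icc 0 T, 0 ≤ a t ∧ a t ≤ δ)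
    (ha0 : a 0 = η) (hb0 : b 0 = 0) :
    σ * η * exp (σ * T) ≤ b T + σ * a T := by
  have hmono : MonotoneOn (fun t => exp (-(σ * t)) * (b t + σ * a t)) (Icc 0 T) := by
    refine monotoneOn_of_hasDerivWithinAt_nonneg (convex_Icc 0 T)
      (fun t _ => (hs.hasDerivAt_exp_mul σ t).continuousAt.continuousWithinAt)
      (fun t _ => (hs.hasDerivAt_exp_mul σ t).hasDerivWithinAt) fun t ht => ?_
    obtain ⟨hat, hatδ⟩ := haT t (interior_subset ht)
    have : a t ^ (2 * p) ≤ δ ^ (2 * p) := pow_le_pow_left₀ hat hatδ _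
    have : 0 ≤ m ^ 2 - σ ^ 2 - a t ^ (2 * p) := by linarith
    positivity
  have h := hmono ⟨le_rfl, hT⟩ ⟨hT, le_rfl⟩ hT
  simp only [mul_zero, neg_zero, exp_zero, one_mul, ha0, hb0, zero_add] at h
  calc σ * η * exp (σ * T) ≤ exp (-(σ * T)) * (b T + σ * a T) * exp (σ * T) := by gcongr
    _ = b T + σ * a T := by rw [mul_right_comm, ← exp_add, neg_add_cancel, exp_zero, one_mul]

lemma snd_add_mul_fst_le_mul_exp (hs : IsSolution m p a b) {σ T : ℝ} (hσ : m ^ 2 ≤ σ ^ 2)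
    (ha : ∀ t, 0 ≤ a t) (hT : 0 ≤ T) (ha0 : a 0 = η) (hb0 : b 0 = 0) :
    b T + σ * a T ≤ σ * η * exp (σ * T) := by
  have hanti : Antitone (fun t => exp (-(σ * t)) * (b t + σ * a t)) := by
    refine antitone_of_hasDerivAt_nonpos (hs.hasDerivAt_exp_mul σ) fun t => ?_
    have : m ^ 2 - σ ^ 2 - a t ^ (2 * p) ≤ 0 := by
      linarith [pow_nonneg (ha t) (2 * p)]
    exact mul_nonpos_of_nonneg_of_nonpos (exp_pos _).le (mul_nonpos_of_nonpos_of_nonneg this (ha t))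
  have h := hanti hT
  simp only [mul_zero, neg_zero, exp_zero, one_mul, ha0, hb0, zero_add] at h
  calc b T + σ * a T = exp (-(σ * T)) * (b T + σ * a T) * exp (σ * T) := by
        rw [mul_right_comm, ← exp_add, neg_add_cancel, exp_zero, one_mul]
    _ ≤ σ * η * exp (σ * T) := by gcongr

lemma snd_lt_mul_fst (hs : IsSolution m p a b) (hm : 0 < m) (hη : 0 < η) (ha : ∀ t, 0 ≤ a t)
    (ha0 : a 0 = η) (hb0 : b 0 = 0) {t : ℝ} (ht : 0 ≤ t) : b t < m * a t := by
  have h := hs.snd_add_mul_fst_le_mul_exp (σ := -m) (by rw [neg_sq]) ha ht ha0 hb0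
  have : 0 < m * η * exp (-m * t) := by positivity
  linarith

lemma snd_pos (hs : IsSolution m p a b) {r T : ℝ} (hr : 0 < r) (hr2 : r ^ 2 + δ ^ (2 * p) ≤ m ^ 2)
    (hη : 0 < η) (hηa : ∀ t, η ≤ a t) (haδ : ∀ t ∈ Icc 0 T, a t ≤ δ) (ha0 : a 0 = η)
    (hb0 : b 0 = 0) {t : ℝ} (ht : t ∈ Ioc 0 T) : 0 < b t := by
  have h := hs.mul_exp_le_snd_add_mul_fst (σ := -r) (by rwa [neg_sq]) ht.1.le
    (fun s hst => ⟨hη.le.trans (hηa s), haδ s ⟨hst.1, hst.2.trans ht.2⟩⟩) ha0 hb0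
  have hdecay : η * exp (-r * t) < η :=
    mul_lt_of_lt_one_right hη (exp_lt_one_iff.2 (by nlinarith [ht.1]))
  nlinarith [hηa t]

lemma exists_le_fst (hs : IsSolution m p a b) (hm : 0 < m) {r : ℝ} (hr : 0 < r)
    (hr2 : r ^ 2 + δ ^ (2 * p) ≤ m ^ 2) (hη : 0 < η) (hηa : ∀ t, η ≤ a t) (ha0 : a 0 = η)
    (hb0 : b 0 = 0) : ∃ T ≥ 0, δ ≤ a T := by
  by_contra! h
  have hδ : 0 < δ := hη.trans (ha0 ▸ h 0 le_rfl)
  set T := (m + r) * δ / (r ^ 2 * η)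
  have hT : 0 ≤ T := by positivity
  have ha : ∀ t, 0 ≤ a t := fun t => hη.le.trans (hηa t)
  have hgrowth := hs.mul_exp_le_snd_add_mul_fst hr2 hT
    (fun t ht => ⟨ha t, (h t ht.1).le⟩) ha0 hb0
  have hbT := hs.snd_lt_mul_fst hm hη ha ha0 hb0 hT
  have hexp : r * η * (r * T) < r * η * exp (r * T) := by
    have := add_one_le_exp (r * T)
    gcongr
    linarith
  have hrT : r * η * (r * T) = (m + r) * δ := by
    simp only [T]
    field_simp
  nlinarith [h T hT]

end IsSolution

lemma exists_first_hitting_time {f : ℝ → ℝ} (hf : Continuous f) {c T : ℝ} (h0 : f 0 < c)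
    (hT : 0 ≤ T) (hfT : c ≤ f T) : ∃ τ ∈ Ioc 0 T, f τ = c ∧ ∀ t ∈ Ico 0 τ, f t < c := by
  set S := Icc 0 T ∩ {t | c ≤ f t}
  obtain ⟨τ, ⟨⟨hτ0, hτT⟩, hcτ⟩, hleast⟩ : ∃ τ, IsLeast S τ :=
    (isCompact_Icc.inter_right (isClosed_le continuous_const hf)).exists_isLeast
      ⟨T, ⟨hT, le_rfl⟩, hfT⟩
  have hbefore : ∀ t ∈ Ico 0 τ, f t < c := fun t ht => by
    by_contra! h
    exact (hleast ⟨⟨ht.1, ht.2.le.trans hτT⟩, h⟩).not_gt ht.2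
  have hτ : 0 < τ := hτ0.lt_of_ne fun h => by subst h; exact hcτ.not_gt h0
  obtain ⟨s, hs, hfs⟩ := intermediate_value_Icc hτ0 hf.continuousOn ⟨h0.le, hcτ⟩
  have hsτ : s = τ := le_antisymm hs.2 (hleast ⟨⟨hs.1, hs.2.trans hτT⟩, hfs.ge⟩)
  exact ⟨τ, ⟨hτ, hτT⟩, hsτ ▸ hfs, hbefore⟩

lemma mul_log_inv_le_of_le_mul_exp {k δ η τ : ℝ} (hk : 0 < k) (hδ : 0 < δ) (hη : 0 < η)
    (hηδ : η ≤ δ ^ 2) (h : δ ≤ η * exp (k * τ)) : 1 / (2 * k) * log (1 / η) ≤ τ := by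
  have hlog : log δ ≤ log η + k * τ := by
    simpa [log_mul hη.ne', log_exp] using log_le_log hδ h
  have hlogη : log η ≤ 2 * log δ := by
    simpa [log_pow] using log_le_log hη hηδ
  rw [one_div_mul_eq_div, div_le_iff₀ (by positivity), one_div, log_inv]
  linarith

lemma le_mul_log_inv_of_mul_exp_le {k K η τ : ℝ} (hk : 0 < k) (hη : 0 < η) (hηK : η ≤ K⁻¹)
    (h : η * exp (k * τ) ≤ K) : τ ≤ 2 / k * log (1 / η) := by
  have hK : 0 < K := lt_of_lt_of_le (by positivity) h
  have hlog : log η + k * τ ≤ log K := by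
    simpa [log_mul hη.ne', log_exp] using log_le_log (by positivity) h
  have hlogK : log K ≤ -log η := by
    simpa [log_inv] using log_le_log hK ((le_inv_comm₀ hη hK).1 hηK)
  rw [div_mul_eq_mul_div, le_div_iff₀ hk, one_div, log_inv]
  linarith

/-- for `0 < δ < m^{1/p}` there exist `η₀, c, C > 0` such that for all
`0 < η < η₀`, the solution of `ȧ = b`, `ḃ = m²a - a^{2p+1}` with `a(0) = η`, `b(0) = 0`
reaches `a = δ` at a time `τ_η` with `b > 0` on `(0, τ_η]` and
`c ln(1/η) ≤ τ_η ≤ C ln(1/η)`. -/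
theorem time_to_reach_delta (m : ℝ) (p : ℕ) (hm : 0 < m) (hp : 1 ≤ p)
    (δ : ℝ) (hδ0 : 0 < δ) (hδ : δ < m ^ ((1 : ℝ) / p)) :
    ∃ η₀ > 0, ∃ c > 0, ∃ C > 0, ∀ η : ℝ, 0 < η → η < η₀ →
      ∀ a b : ℝ → ℝ,
        (∀ t : ℝ, HasDerivAt a (b t) t) →
        (∀ t : ℝ, HasDerivAt b (m ^ 2 * a t - a t ^ (2 * p + 1)) t) →
        a 0 = η → b 0 = 0 →
        ∃ τ : ℝ, 0 < τ ∧ a τ = δ ∧ (∀ t ∈ Set.Ioc 0 τ, 0 < b t) ∧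
          c * Real.log (1 / η) ≤ τ ∧ τ ≤ C * Real.log (1 / η) := by
  have hδm : δ ^ (2 * p) < m ^ 2 := by
    rw [one_div, lt_rpow_inv_iff_of_pos hδ0.le hm.le (Nat.cast_pos.2 hp), rpow_natCast] at hδ
    rw [pow_mul']
    exact pow_lt_pow_left₀ hδ (by positivity) two_ne_zero
  obtain ⟨r, hr, hr2⟩ : ∃ r > 0, r ^ 2 + δ ^ (2 * p) ≤ m ^ 2 :=
    ⟨√(m ^ 2 - δ ^ (2 * p)), sqrt_pos.2 (by linarith), by rw [sq_sqrt (by linarith)]; linarith⟩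
  refine ⟨min (min δ (δ ^ 2)) ((m + r) * δ / r)⁻¹, by positivity, 1 / (2 * m), by positivity,
    2 / r, by positivity, fun η hη hηη₀ a b ha hb ha0 hb0 => ?_⟩
  obtain ⟨⟨hηδ, hηδ2⟩, hηK⟩ := (lt_min_iff.1 hηη₀).imp_left lt_min_iff.1
  have hs : IsSolution m p a b := ⟨ha, hb⟩
  have hηa := hs.le_fst hη ((pow_le_pow_left₀ hη.le hηδ.le _).trans_lt hδm) ha0 hb0
  have ha : ∀ t, 0 ≤ a t := fun t => hη.le.trans (hηa t)
  obtain ⟨T, hT, hδT⟩ := hs.exists_le_fst hm hr hr2 hη hηa ha0 hb0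
  obtain ⟨τ, ⟨hτ, -⟩, haτ, hbefore⟩ :=
    exists_first_hitting_time hs.continuous_fst (ha0 ▸ hηδ) hT hδT
  have haδ : ∀ t ∈ Icc 0 τ, a t ≤ δ := fun t ht =>
    ht.2.eq_or_lt.elim (fun h => (h ▸ haτ).le) fun h => (hbefore t ⟨ht.1, h⟩).le
  have hb := fun t => hs.snd_pos (t := t) hr hr2 hη hηa haδ ha0 hb0
  refine ⟨τ, hτ, haτ, hb, mul_log_inv_le_of_le_mul_exp hm hδ0 hη hηδ2.le ?_,
    le_mul_log_inv_of_mul_exp_le hr hη hηK.le ?_⟩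
  · have := hs.snd_add_mul_fst_le_mul_exp le_rfl ha hτ.le ha0 hb0
    nlinarith [hb τ ⟨hτ, le_rfl⟩]
  · have := hs.mul_exp_le_snd_add_mul_fst hr2 hτ.le (fun t ht => ⟨ha t, haδ t ht⟩) ha0 hb0
    have := hs.snd_lt_mul_fst hm hη ha ha0 hb0 hτ.le
    rw [le_div_iff₀ hr]
    nlinarith
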